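/- arXiv:cs/0607100 — 6 statements merged into one kernel-verified Lean document; each statement's English description precedes it below -/
import Mathlib

section
/- For every integer k ≥ 2, the harmonic weighting function f_k satisfies: for any finite sequence x_1,...,x_m of reals in (0,1] with sum at most 1, the sum of f_k(x_i) is at most T_k, where T_k = Σ_{i=1}^{m(k)} 1/t_i + (1/t_{m(k)+1})·(k/(k-1)). -/
/-- The sequence from the Harmonic algorithm: `t 1 = 1`, `t (i+1) = t i * (t i + 1)`. -/
def tSeq : ℕ → ℕ
  | 0 => 1
  | 1 => 1
  | (n + 2) => tSeq (n + 1) * (tSeq (n + 1) + 1)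

/-- The harmonic weighting function `f_k`: `f_k x = 1/t` when `1/(t+1) < x ≤ 1/t` with
`t < k` (so `t = ⌊1/x⌋`), and `f_k x = k*x/(k-1)` when `0 < x ≤ 1/k`. -/
noncomputable def fHarm (k : ℕ) (x : ℝ) : ℝ :=
  if x ≤ 1 / k then k * x / ((k : ℝ) - 1) else 1 / (⌊1 / x⌋ : ℝ)

/-- The harmonic constant `T_k = Σ_{i=1}^{m} 1/t_i + (1/t_{m+1}) * (k/(k-1))`,
where `m = m(k)` satisfies `t_m < k ≤ t_{m+1}`. -/
noncomputable def TkVal (k m : ℕ) : ℝ :=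
  (∑ i ∈ Finset.Icc 1 m, (1 : ℝ) / (tSeq i : ℝ)) +
    (1 / (tSeq (m + 1) : ℝ)) * ((k : ℝ) / ((k : ℝ) - 1))

/-!
Downward induction on `j`: a budget `∑ xᵢ ≤ 1 / t_j` with `j ≤ m(k)` either contains an item
`x > 1 / (t_j + 1)`, which has weight `1 / t_j` and leaves a budget below
`1 / t_j - 1 / (t_j + 1) = 1 / t_{j+1}`, or all its items are at most `1 / (t_j + 1)`, where
`f_k x ≤ (1 + c / (t_j + 1)) x` with `c = k / (k - 1)`, so that the whole budget earns at most
`1 / t_j + c / t_{j+1}`; this fits because `c / t_i` is at most the tail bound from `i` on,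
as `t_i < k`. Once `j = m(k) + 1`, every item is at most `1 / k` and earns `c x`.
-/

open Finset

lemma tSeq_succ {j : ℕ} (hj : 1 ≤ j) : tSeq (j + 1) = tSeq j * (tSeq j + 1) := by
  obtain ⟨n, rfl⟩ := Nat.exists_eq_add_of_le' hj
  rfl

lemma tSeq_pos : ∀ n, 0 < tSeq n
  | 0 => Nat.one_pos
  | 1 => Nat.one_pos
  | n + 2 => Nat.mul_pos (tSeq_pos (n + 1)) (Nat.succ_pos _)

lemma tSeq_monotone : Monotone tSeq := by
  refine monotone_nat_of_le_succ fun n => ?_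
  rcases n with _ | n
  · rfl
  · rw [tSeq_succ n.succ_pos]
    exact Nat.le_mul_of_pos_right _ (Nat.succ_pos _)

lemma cast_tSeq_succ {j : ℕ} (hj : 1 ≤ j) :
    (tSeq (j + 1) : ℝ) = tSeq j * (tSeq j + 1) := by
  rw [tSeq_succ hj]
  push_cast
  ring

lemma one_lt_of_tSeq_lt {k m : ℕ} (hm : tSeq m < k) : 1 < k :=
  Nat.lt_of_le_of_lt (tSeq_pos m) hm

lemma fHarm_of_le {k : ℕ} {x : ℝ} (hx : x ≤ 1 / k) : fHarm k x = k / (k - 1) * x := by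
  rw [fHarm, if_pos hx]
  ring

lemma fHarm_of_one_div_lt_of_le {k t : ℕ} (htk : t < k) {x : ℝ}
    (hlo : 1 / (t + 1 : ℝ) < x) (hhi : x ≤ 1 / t) : fHarm k x = 1 / t := by
  have hx0 : 0 < x := lt_trans (by positivity) hlo
  have ht : (0 : ℝ) < t := by
    rcases Nat.eq_zero_or_pos t with rfl | ht
    · norm_num at hlo hhi
      linarith
    · exact_mod_cast ht
  have hbig : ¬ x ≤ 1 / k :=
    not_le.2 <| lt_of_le_of_lt
      (one_div_le_one_div_of_le (by positivity) (by exact_mod_cast htk)) hlo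
  have hfloor : ⌊1 / x⌋ = (t : ℤ) := by
    rw [Int.floor_eq_iff]
    push_cast
    exact ⟨(le_one_div ht hx0).2 hhi, (one_div_lt hx0 (by positivity)).2 hlo⟩
  rw [fHarm, if_neg hbig, hfloor, Int.cast_natCast]

lemma fHarm_le_mul_of_le_one_div {k t : ℕ} (hk : 1 < k) (htk : t + 1 ≤ k) {x : ℝ}
    (hx0 : 0 ≤ x) (hxt : x ≤ 1 / (t + 1)) :
    fHarm k x ≤ (1 + k / (k - 1) / (t + 1)) * x := by
  have hK : (1 : ℝ) < k := by exact_mod_cast hk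
  have hTK : (t : ℝ) + 1 ≤ k := by exact_mod_cast htk
  have hc : 1 ≤ (k : ℝ) / (k - 1) := (one_le_div (by linarith)).2 (by linarith)
  by_cases hsmall : x ≤ 1 / k
  · rw [fHarm_of_le hsmall]
    refine mul_le_mul_of_nonneg_right ?_ hx0
    have hK1 : (0 : ℝ) < k - 1 := by linarith
    field_simp
    nlinarith
  · have hx : 0 < x := (one_div_pos.2 (by linarith : (0 : ℝ) < k)).trans (not_le.1 hsmall)
    have hS : 1 / x < (⌊1 / x⌋ : ℝ) + 1 := Int.lt_floor_add_one _
    have htS : (t : ℝ) + 1 ≤ (⌊1 / x⌋ : ℝ) := by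
      have : (((t + 1 : ℕ) : ℤ) : ℝ) ≤ 1 / x := by
        push_cast
        exact (le_one_div hx (by positivity)).1 hxt
      exact_mod_cast Int.le_floor.2 this
    rw [fHarm, if_neg hsmall]
    generalize (⌊1 / x⌋ : ℝ) = S at hS htS ⊢
    have hS0 : 0 < S := by linarith
    calc 1 / S ≤ (1 + 1 / S) * x := by
          rw [div_lt_iff₀ hx] at hS
          rw [one_add_div hS0.ne', div_mul_eq_mul_div, div_le_div_iff_of_pos_right hS0]
          linarith
      _ ≤ (1 + 1 / (t + 1)) * x := by gcongr
      _ ≤ (1 + k / (k - 1) / (t + 1)) * x := by gcongr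

lemma sum_fHarm_of_forall_le {ι : Type*} {k : ℕ} {s : Finset ι} {x : ι → ℝ}
    (hx : ∀ i ∈ s, x i ≤ 1 / k) :
    ∑ i ∈ s, fHarm k (x i) = k / (k - 1) * ∑ i ∈ s, x i := by
  rw [mul_sum]
  exact sum_congr rfl fun i hi => fHarm_of_le (hx i hi)

lemma sum_fHarm_le_mul_sum {ι : Type*} {k t : ℕ} (hk : 1 < k) (htk : t + 1 ≤ k)
    {s : Finset ι} {x : ι → ℝ} (hx0 : ∀ i ∈ s, 0 ≤ x i)
    (hxt : ∀ i ∈ s, x i ≤ 1 / (t + 1)) :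
    ∑ i ∈ s, fHarm k (x i) ≤ (1 + k / (k - 1) / (t + 1)) * ∑ i ∈ s, x i := by
  rw [mul_sum]
  exact sum_le_sum fun i hi => fHarm_le_mul_of_le_one_div hk htk (hx0 i hi) (hxt i hi)

/-- The part of `TkVal k m` from index `j` on, so that `TkVal k m = harmonicTail k m 1`. -/
noncomputable def harmonicTail (k m j : ℕ) : ℝ :=
  (∑ i ∈ Icc j m, (1 : ℝ) / (tSeq i : ℝ)) +
    (1 / (tSeq (m + 1) : ℝ)) * ((k : ℝ) / ((k : ℝ) - 1))

section HarmonicTail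

variable {k m : ℕ}

lemma harmonicTail_eq_add {j : ℕ} (hj : j ≤ m) :
    harmonicTail k m j = 1 / tSeq j + harmonicTail k m (j + 1) := by
  rw [harmonicTail, harmonicTail, ← insert_Icc_add_one_left_eq_Icc hj,
    sum_insert (by simp), add_assoc]

lemma harmonicTail_succ_self : harmonicTail k m (m + 1) = k / (k - 1) / tSeq (m + 1) := by
  simp only [harmonicTail, Icc_eq_empty (Nat.lt_succ_self m).not_ge, sum_empty]
  ring

lemma div_tSeq_le_harmonicTail {j : ℕ} (hm : tSeq m < k) (hj : 1 ≤ j) (hjm : j ≤ m + 1) :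
    k / (k - 1) / tSeq j ≤ harmonicTail k m j := by
  obtain rfl | hjm := eq_or_lt_of_le hjm
  · exact harmonicTail_succ_self.ge
  have hK : (1 : ℝ) < k := by exact_mod_cast one_lt_of_tSeq_lt hm
  have hT : (tSeq j : ℝ) + 1 ≤ k := by
    exact_mod_cast (tSeq_monotone (by omega : j ≤ m)).trans_lt hm
  have hT0 : (0 : ℝ) < tSeq j := by exact_mod_cast tSeq_pos j
  have ih := div_tSeq_le_harmonicTail hm (by omega : 1 ≤ j + 1) hjm
  rw [cast_tSeq_succ hj] at ih
  calc (k : ℝ) / (k - 1) / tSeq j ≤ 1 / tSeq j + k / (k - 1) / (tSeq j * (tSeq j + 1)) := by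
        have hK1 : (0 : ℝ) < k - 1 := by linarith
        field_simp
        nlinarith
    _ ≤ 1 / tSeq j + harmonicTail k m (j + 1) := by gcongr
    _ = harmonicTail k m j := (harmonicTail_eq_add (by omega)).symm
termination_by m + 1 - j

theorem sum_fHarm_le_harmonicTail (hm1 : tSeq m < k) (hm2 : k ≤ tSeq (m + 1))
    {ι : Type*} [DecidableEq ι] (s : Finset ι) (x : ι → ℝ) (hx : ∀ i ∈ s, 0 ≤ x i)
    {j : ℕ} (hj : 1 ≤ j) (hjm : j ≤ m + 1)
    (hs : ∑ i ∈ s, x i ≤ 1 / tSeq j) : ∑ i ∈ s, fHarm k (x i) ≤ harmonicTail k m j := by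
  have hK : (1 : ℝ) < k := by exact_mod_cast one_lt_of_tSeq_lt hm1
  have hle_sum : ∀ i ∈ s, x i ≤ 1 / tSeq j := fun i hi => (single_le_sum hx hi).trans hs
  obtain rfl | hjm := eq_or_lt_of_le hjm
  · have hsmall : ∀ i ∈ s, x i ≤ 1 / k := fun i hi =>
      (hle_sum i hi).trans (one_div_le_one_div_of_le (by linarith) (by exact_mod_cast hm2))
    have hc : (0 : ℝ) ≤ k / (k - 1) := div_nonneg (by linarith) (by linarith)
    calc ∑ i ∈ s, fHarm k (x i) = k / (k - 1) * ∑ i ∈ s, x i :=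
          sum_fHarm_of_forall_le hsmall
      _ ≤ k / (k - 1) * (1 / tSeq (m + 1)) := by gcongr
      _ = harmonicTail k m (m + 1) := by rw [harmonicTail_succ_self]; ring
  have htk : tSeq j < k := (tSeq_monotone (by omega : j ≤ m)).trans_lt hm1
  have hT0 : (0 : ℝ) < tSeq j := by exact_mod_cast tSeq_pos j
  by_cases hbig : ∃ i ∈ s, 1 / ((tSeq j : ℝ) + 1) < x i
  · obtain ⟨i, hi, hxi⟩ := hbig
    have hrest : ∑ l ∈ s.erase i, x l ≤ 1 / tSeq (j + 1) := by
      have hgap : 1 / (tSeq j : ℝ) - 1 / (tSeq j + 1) = 1 / tSeq (j + 1) := by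
        rw [cast_tSeq_succ hj]
        field_simp
        ring
      rw [← add_sum_erase s _ hi] at hs
      linarith
    have ih := sum_fHarm_le_harmonicTail hm1 hm2 (s.erase i) x
      (fun l hl => hx l (mem_of_mem_erase hl)) (by omega) hjm hrest
    rw [← add_sum_erase s _ hi, fHarm_of_one_div_lt_of_le htk hxi (hle_sum i hi),
      harmonicTail_eq_add (by omega)]
    linarith
  · push Not at hbig
    calc ∑ i ∈ s, fHarm k (x i) ≤ (1 + k / (k - 1) / (tSeq j + 1)) * ∑ i ∈ s, x i :=
          sum_fHarm_le_mul_sum (one_lt_of_tSeq_lt hm1) htk hx hbig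
      _ ≤ (1 + k / (k - 1) / (tSeq j + 1)) * (1 / tSeq j) := by gcongr
      _ = 1 / tSeq j + k / (k - 1) / tSeq (j + 1) := by
          rw [cast_tSeq_succ hj]
          field_simp
      _ ≤ 1 / tSeq j + harmonicTail k m (j + 1) := by
          gcongr
          exact div_tSeq_le_harmonicTail hm1 (by omega) hjm
      _ = harmonicTail k m j := (harmonicTail_eq_add (by omega)).symm
termination_by m + 1 - j

end HarmonicTail

theorem harmonic_weight_sum_le_Tk_general (k m : ℕ)
    (hm1 : tSeq m < k) (hm2 : k ≤ tSeq (m + 1))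
    (n : ℕ) (x : Fin n → ℝ) (hx : ∀ i, 0 < x i ∧ x i ≤ 1)
    (hsum : (∑ i, x i) ≤ 1) :
    (∑ i, fHarm k (x i)) ≤ TkVal k m :=
  sum_fHarm_le_harmonicTail hm1 hm2 univ x (fun i _ => (hx i).1.le) le_rfl (by omega)
    (by simpa [tSeq] using hsum)

/-- For every integer `k ≥ 2` and any finite sequence `x_1, …, x_m` of reals in `(0,1]`
with sum at most `1`, the sum of `f_k (x i)` is at most `T_k`. -/
theorem harmonic_weight_sum_le_Tk (k m : ℕ) (hk : 2 ≤ k)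
    (hm1 : tSeq m < k) (hm2 : k ≤ tSeq (m + 1))
    (n : ℕ) (x : Fin n → ℝ) (hx : ∀ i, 0 < x i ∧ x i ≤ 1)
    (hsum : (∑ i, x i) ≤ 1) :
    (∑ i, fHarm k (x i)) ≤ TkVal k m :=
  harmonic_weight_sum_le_Tk_general k m hm1 hm2 n x hx hsum
end

section
/- If f_1 and f_2 are dual feasible functions and rectangles (l_1,w_1),...,(l_m,w_m) with l_i, w_i ∈ [0,1] can be packed without overlap (axis-parallel, no rotation) into the unit square, then Σ_{i=1}^m f_1(l_i)·f_2(w_i) ≤ 1. -/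
/-- A function `f : [0,1] → [0,1]` is dual feasible if `Σ f (x i) ≤ 1` whenever the
`x i` lie in `[0,1]` and `Σ x i ≤ 1`. -/
def DualFeasible (f : ℝ → ℝ) : Prop :=
  (∀ x ∈ Set.Icc (0 : ℝ) 1, f x ∈ Set.Icc (0 : ℝ) 1) ∧
  ∀ (n : ℕ) (x : Fin n → ℝ), (∀ i, x i ∈ Set.Icc (0 : ℝ) 1) → (∑ i, x i) ≤ 1 →
    (∑ i, f (x i)) ≤ 1

/-!
Along a horizontal line `y = t` the rectangles crossing it have disjoint horizontal sides, so
`p i = f₁ (l i)` sums to at most `1` over every set of vertical sides sharing a point, while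
`g i = f₂ (w i)` sums to at most `1` over every set of pairwise disjoint vertical sides. For
intervals these two conditions give `∑ p i * g i ≤ 1` (clique/independent-set duality in interval
graphs). Induct by removing the interval `j` with the largest left endpoint: `j` and its
neighbours share a point, and lowering `g` by `g j` on the neighbours keeps the independent sums
below `1 - g j`.
-/

open MeasureTheory Set Finset Topology

theorem DualFeasible.sum_le_one {f : ℝ → ℝ} (hf : DualFeasible f) {ι : Type*} (s : Finset ι)
    (x : ι → ℝ) (hx : ∀ i ∈ s, x i ∈ Icc (0 : ℝ) 1) (hs : ∑ i ∈ s, x i ≤ 1) :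
    ∑ i ∈ s, f (x i) ≤ 1 := by
  rw [← s.sum_coe_sort, ← s.equivFin.symm.sum_comp] at hs ⊢
  exact hf.2 _ _ (fun k => hx _ (s.equivFin.symm k).2) hs

theorem sum_le_one_of_pairwiseDisjoint_Ioo {ι : Type*} {s : Finset ι} {a l : ι → ℝ}
    (hl : ∀ i ∈ s, 0 ≤ l i) (hsub : ∀ i ∈ s, 0 ≤ a i ∧ a i + l i ≤ 1)
    (hd : (s : Set ι).PairwiseDisjoint fun i => Ioo (a i) (a i + l i)) :
    ∑ i ∈ s, l i ≤ 1 := by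
  have hvol : ENNReal.ofReal (∑ i ∈ s, l i) ≤ ENNReal.ofReal 1 :=
    calc ENNReal.ofReal (∑ i ∈ s, l i) = ∑ i ∈ s, volume (Ioo (a i) (a i + l i)) := by
          simp [ENNReal.ofReal_sum_of_nonneg hl, Real.volume_Ioo]
      _ = volume (⋃ i ∈ s, Ioo (a i) (a i + l i)) :=
          (measure_biUnion_finset hd fun _ _ => measurableSet_Ioo).symm
      _ ≤ volume (Icc (0 : ℝ) 1) := measure_mono <| iUnion₂_subset fun i hi =>
          Ioo_subset_Icc_self.trans (Icc_subset_Icc (hsub i hi).1 (hsub i hi).2)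
      _ = ENNReal.ofReal 1 := by simp [Real.volume_Icc]
  exact (ENNReal.ofReal_le_ofReal_iff zero_le_one).1 hvol

theorem DualFeasible.sum_le_one_of_pairwiseDisjoint {f : ℝ → ℝ} (hf : DualFeasible f)
    {ι : Type*} {s : Finset ι} {a l : ι → ℝ} (hl : ∀ i ∈ s, l i ∈ Icc (0 : ℝ) 1)
    (hsub : ∀ i ∈ s, 0 ≤ a i ∧ a i + l i ≤ 1)
    (hd : (s : Set ι).PairwiseDisjoint fun i => Ioo (a i) (a i + l i)) :
    ∑ i ∈ s, f (l i) ≤ 1 :=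
  hf.sum_le_one s l hl (sum_le_one_of_pairwiseDisjoint_Ioo (fun i hi => (hl i hi).1) hsub hd)

theorem exists_forall_mem_Ioo {ι : Type*} {s : Finset ι} {x y : ι → ℝ} {z : ℝ}
    (h : ∀ i ∈ s, x i ≤ z ∧ z < y i) : ∃ t, ∀ i ∈ s, t ∈ Ioo (x i) (y i) :=
  ((s.eventually_all (l := 𝓝[>] z)).2 fun i hi => Filter.mem_of_superset
    (Ioo_mem_nhdsGT (h i hi).2) (Ioo_subset_Ioo_left (h i hi).1)).exists

theorem exists_forall_mem_Ioo_of_not_disjoint {ι : Type*} {s : Finset ι} {x y : ι → ℝ} {j : ι}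
    (hjmax : ∀ i ∈ s, x i ≤ x j)
    (hmeet : ∀ i ∈ s, ¬Disjoint (Ioo (x i) (y i)) (Ioo (x j) (y j))) :
    ∃ t, ∀ i ∈ s, t ∈ Ioo (x i) (y i) := by
  refine exists_forall_mem_Ioo fun i hi => ⟨hjmax i hi, ?_⟩
  obtain ⟨t, hti, htj⟩ := not_disjoint_iff.1 (hmeet i hi)
  exact htj.1.trans hti.2

section LowerNeighbors

variable {α ι : Type*} (I : ι → Set α) (g : ι → ℝ) (j : ι)

open Classical in
noncomputable def lowerNeighbors (i : ι) : ℝ :=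
  if Disjoint (I i) (I j) then g i else max (g i - g j) 0

variable {I g j}

theorem lowerNeighbors_nonneg {i : ι} (hi : 0 ≤ g i) : 0 ≤ lowerNeighbors I g j i := by
  unfold lowerNeighbors
  split_ifs
  exacts [hi, le_max_right _ _]

theorem lowerNeighbors_le {i : ι} (hi : 0 ≤ g i) (hj : 0 ≤ g j) :
    lowerNeighbors I g j i ≤ g i := by
  unfold lowerNeighbors
  split_ifs
  exacts [le_rfl, max_le (by linarith) hi]

open Classical in
theorem le_lowerNeighbors_add (i : ι) :
    g i ≤ lowerNeighbors I g j i + if Disjoint (I i) (I j) then 0 else g j := by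
  unfold lowerNeighbors
  split_ifs
  · simp
  · linarith [le_max_left (g i - g j) 0]

/-- An independent set avoiding `j` either contains a neighbour `i` of `j` with `g j ≤ g i`,
where the lowering costs `g j`, or stays independent after adding `j`. -/
theorem sum_lowerNeighbors_le [DecidableEq ι] {s u : Finset ι} {c : ℝ} (hg₀ : ∀ i ∈ s, 0 ≤ g i)
    (hg : ∀ u ⊆ s, (u : Set ι).PairwiseDisjoint I → ∑ i ∈ u, g i ≤ c)
    (hj : j ∈ s) (hu : u ⊆ s.erase j) (hdisj : (u : Set ι).PairwiseDisjoint I) :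
    ∑ i ∈ u, lowerNeighbors I g j i ≤ c - g j := by
  classical
  have hus : u ⊆ s := hu.trans (erase_subset j s)
  by_cases hbig : ∃ i ∈ u, ¬Disjoint (I i) (I j) ∧ g j ≤ g i
  · obtain ⟨i, hiu, hij, hgi⟩ := hbig
    calc ∑ k ∈ u, lowerNeighbors I g j k
        = lowerNeighbors I g j i + ∑ k ∈ u.erase i, lowerNeighbors I g j k :=
          (add_sum_erase _ _ hiu).symm
      _ ≤ g i - g j + ∑ k ∈ u.erase i, g k := by
          gcongr with k hk
          · simp [lowerNeighbors, hij, hgi]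
          · exact lowerNeighbors_le (hg₀ k (hus (mem_of_mem_erase hk))) (hg₀ j hj)
      _ = ∑ k ∈ u, g k - g j := by rw [← add_sum_erase _ _ hiu]; ring
      _ ≤ c - g j := by linarith [hg u hus hdisj]
  · push Not at hbig
    set v := u.filter fun k => Disjoint (I k) (I j)
    have hsum : ∑ k ∈ u, lowerNeighbors I g j k = ∑ k ∈ v, g k := by
      rw [sum_filter]
      refine sum_congr rfl fun k hk => ?_
      by_cases hkj : Disjoint (I k) (I j)
      · simp [lowerNeighbors, hkj]
      · simp [lowerNeighbors, hkj, (hbig k hk hkj).le]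
    have hjv : j ∉ v := fun h => notMem_erase j s (hu (mem_filter.1 h).1)
    have hindep : ((insert j v : Finset ι) : Set ι).PairwiseDisjoint I := by
      rw [coe_insert]
      exact (hdisj.subset (coe_subset.2 (filter_subset _ _))).insert
        fun k hk _ => (mem_filter.1 hk).2.symm
    have := hg _ (insert_subset hj ((filter_subset _ _).trans hus)) hindep
    rw [sum_insert hjv] at this
    linarith

end LowerNeighbors

open Classical in
theorem add_sum_filter_not_disjoint_le_one {ι : Type*} {s : Finset ι} {x y p : ι → ℝ} {j : ι}
    (hj : j ∈ s) (hjmax : ∀ i ∈ s, x i ≤ x j) (hp₁ : p j ≤ 1)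
    (hp : ∀ t, ∀ u ⊆ s, (∀ i ∈ u, t ∈ Ioo (x i) (y i)) → ∑ i ∈ u, p i ≤ 1) :
    p j + ∑ i ∈ s.erase j with ¬Disjoint (Ioo (x i) (y i)) (Ioo (x j) (y j)), p i ≤ 1 := by
  set N := (s.erase j).filter fun i => ¬Disjoint (Ioo (x i) (y i)) (Ioo (x j) (y j))
  rcases N.eq_empty_or_nonempty with hN₀ | ⟨k, hk⟩
  · simpa [hN₀] using hp₁
  have hjj : ¬Disjoint (Ioo (x j) (y j)) (Ioo (x j) (y j)) := by
    obtain ⟨t, -, ht⟩ := not_disjoint_iff.1 (mem_filter.1 hk).2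
    exact not_disjoint_iff.2 ⟨t, ht, ht⟩
  have hK : insert j N ⊆ s := insert_subset hj ((filter_subset _ _).trans (erase_subset j s))
  obtain ⟨t, ht⟩ := exists_forall_mem_Ioo_of_not_disjoint (s := insert j N)
    (fun i hi => hjmax i (hK hi))
    ((forall_mem_insert _ _ _).2 ⟨hjj, fun i hi => (mem_filter.1 hi).2⟩)
  rw [← sum_insert fun h => notMem_erase j s (mem_filter.1 h).1]
  exact hp t _ hK ht

theorem sum_mul_le_of_forall_mem_Ioo {ι : Type*} (s : Finset ι) (x y p g : ι → ℝ) (c : ℝ)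
    (hp₀ : ∀ i ∈ s, 0 ≤ p i) (hp₁ : ∀ i ∈ s, p i ≤ 1)
    (hp : ∀ t, ∀ u ⊆ s, (∀ i ∈ u, t ∈ Ioo (x i) (y i)) → ∑ i ∈ u, p i ≤ 1)
    (hg₀ : ∀ i ∈ s, 0 ≤ g i)
    (hg : ∀ u ⊆ s, (u : Set ι).PairwiseDisjoint (fun i => Ioo (x i) (y i)) →
      ∑ i ∈ u, g i ≤ c) :
    ∑ i ∈ s, p i * g i ≤ c := by
  classical
  induction s using Finset.strongInduction generalizing g c with | H s ih =>
  rcases s.eq_empty_or_nonempty with rfl | hs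
  · simpa using hg ∅ (empty_subset _) (by simp)
  set I : ι → Set ℝ := fun i => Ioo (x i) (y i)
  obtain ⟨j, hj, hjmax⟩ := s.exists_max_image x hs
  set s' := s.erase j
  have hs' : s' ⊆ s := erase_subset j s
  set N := s'.filter fun i => ¬Disjoint (I i) (I j)
  have hclique : p j + ∑ i ∈ N, p i ≤ 1 := add_sum_filter_not_disjoint_le_one hj hjmax (hp₁ j hj) hp
  have hIH : ∑ i ∈ s', p i * lowerNeighbors I g j i ≤ c - g j :=
    ih s' (erase_ssubset hj) _ _ (fun i hi => hp₀ i (hs' hi)) (fun i hi => hp₁ i (hs' hi))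
      (fun t u hu => hp t u (hu.trans hs')) (fun i hi => lowerNeighbors_nonneg (hg₀ i (hs' hi)))
      fun u hu => sum_lowerNeighbors_le hg₀ hg hj hu
  calc ∑ i ∈ s, p i * g i = p j * g j + ∑ i ∈ s', p i * g i := (add_sum_erase s _ hj).symm
    _ ≤ p j * g j + ∑ i ∈ s', p i * (lowerNeighbors I g j i +
          if Disjoint (I i) (I j) then 0 else g j) := by
        gcongr with i hi
        exacts [hp₀ i (hs' hi), le_lowerNeighbors_add i]
    _ = p j * g j + ∑ i ∈ s', p i * lowerNeighbors I g j i + g j * ∑ i ∈ N, p i := by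
        simp only [mul_add, sum_add_distrib, mul_ite, mul_zero, sum_ite, sum_const_zero,
          zero_add, add_assoc, sum_mul, mul_comm (g j), N]
    _ ≤ p j * g j + (c - g j) + g j * (1 - p j) := by
        gcongr
        · exact hg₀ j hj
        · linarith
    _ = c := by ring

/-- If `f₁, f₂` are dual feasible functions and rectangles `(l i, w i)` can be packed
axis-parallel without overlap into the unit square, then `Σ f₁(l i) * f₂(w i) ≤ 1`. -/
theorem dualFeasible_product_packing (f₁ f₂ : ℝ → ℝ)
    (hf₁ : DualFeasible f₁) (hf₂ : DualFeasible f₂)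
    (m : ℕ) (l w a b : Fin m → ℝ)
    (hl : ∀ i, l i ∈ Set.Icc (0 : ℝ) 1) (hw : ∀ i, w i ∈ Set.Icc (0 : ℝ) 1)
    (hin : ∀ i, 0 ≤ a i ∧ a i + l i ≤ 1 ∧ 0 ≤ b i ∧ b i + w i ≤ 1)
    (hdisj : ∀ i j, i ≠ j →
      (Set.Ioo (a i) (a i + l i) ×ˢ Set.Ioo (b i) (b i + w i)) ∩
        (Set.Ioo (a j) (a j + l j) ×ˢ Set.Ioo (b j) (b j + w j)) = ∅) :
    (∑ i, f₁ (l i) * f₂ (w i)) ≤ 1 := by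
  have hsides : ∀ i j, i ≠ j → Disjoint (Ioo (a i) (a i + l i)) (Ioo (a j) (a j + l j)) ∨
      Disjoint (Ioo (b i) (b i + w i)) (Ioo (b j) (b j + w j)) := fun i j hij =>
    disjoint_prod.1 (disjoint_iff_inter_eq_empty.2 (hdisj i j hij))
  refine sum_mul_le_of_forall_mem_Ioo univ b (fun i => b i + w i) (fun i => f₁ (l i))
    (fun i => f₂ (w i)) 1 (fun i _ => (hf₁.1 _ (hl i)).1) (fun i _ => (hf₁.1 _ (hl i)).2) ?_
    (fun i _ => (hf₂.1 _ (hw i)).1) ?_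
  · intro t u _ ht
    exact hf₁.sum_le_one_of_pairwiseDisjoint (fun i _ => hl i)
      (fun i _ => ⟨(hin i).1, (hin i).2.1⟩) fun i hi j hj hij =>
        (hsides i j hij).resolve_right (not_disjoint_iff.2 ⟨t, ht i hi, ht j hj⟩)
  · intro u _ hu
    exact hf₂.sum_le_one_of_pairwiseDisjoint (fun i _ => hw i)
      (fun i _ => ⟨(hin i).2.2.1, (hin i).2.2.2⟩) hu
end

section
/- The LP dual of the fractional bin packing LP has an optimal solution π* that is monotone in the item sizes: π*_1 ≥ π*_2 ≥ ... ≥ π*_p whenever s_1 > s_2 > ... > s_p. -/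
/-! Take any optimal dual solution `π` (the dual feasible region is compact) and replace
each `π j` by the suffix maximum `max_{m ≥ j} π m`, attained at some `f j ≥ j`. The result
is antitone and dominates `π`, so its objective is at least as large; it stays feasible
because a pattern `v` is charged by `π ∘ f` exactly what the pattern obtained by moving each
item `j` to the smaller item `f j` is charged by `π`, and the moved pattern still fits. -/

open Finset

namespace FractionalBinPacking

variable {ι : Type*} [Fintype ι]

def DualFeasible (s : ι → ℝ) : Set (ι → ℝ) :=
  {π | (∀ j, 0 ≤ π j) ∧ ∀ v : ι → ℕ, ∑ j, (v j : ℝ) * s j ≤ 1 → ∑ j, (v j : ℝ) * π j ≤ 1}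

lemma le_one_of_mem_dualFeasible [DecidableEq ι] {s π : ι → ℝ} (hπ : π ∈ DualFeasible s)
    {j : ι} (hj : s j ≤ 1) : π j ≤ 1 := by
  simpa [Pi.single_apply] using hπ.2 (Pi.single j 1) (by simpa [Pi.single_apply] using hj)

lemma isClosed_dualFeasible (s : ι → ℝ) : IsClosed (DualFeasible s) := by
  simp only [DualFeasible, Set.ofPred_and, Set.ofPred_forall]
  refine (isClosed_iInter fun j => isClosed_le continuous_const (continuous_apply j)).inter
    (isClosed_iInter fun v => isClosed_iInter fun _ => isClosed_le ?_ continuous_const)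
  fun_prop

lemma isCompact_dualFeasible {s : ι → ℝ} (hs : ∀ j, s j ≤ 1) :
    IsCompact (DualFeasible s) := by
  classical
  refine (isCompact_Icc (a := 0) (b := 1)).of_isClosed_subset (isClosed_dualFeasible s)
    fun π hπ => ⟨hπ.1, fun j => le_one_of_mem_dualFeasible hπ (hs j)⟩

lemma exists_isMaxOn_dualFeasible {s : ι → ℝ} (hs : ∀ j, s j ≤ 1) (n : ι → ℕ) :
    ∃ π ∈ DualFeasible s, IsMaxOn (fun π => ∑ j, (n j : ℝ) * π j) (DualFeasible s) π :=
  (isCompact_dualFeasible hs).exists_isMaxOn ⟨0, fun _ => le_rfl, fun v _ => by simp⟩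
    (by fun_prop)

open Classical in
lemma sum_fiberwise_cast_mul (f : ι → ι) (v : ι → ℕ) (g : ι → ℝ) :
    ∑ m, ((∑ j with f j = m, v j : ℕ) : ℝ) * g m = ∑ j, (v j : ℝ) * g (f j) := by
  rw [← Finset.sum_fiberwise univ f fun j => (v j : ℝ) * g (f j)]
  refine Finset.sum_congr rfl fun m _ => ?_
  rw [Nat.cast_sum, Finset.sum_mul]
  exact Finset.sum_congr rfl fun j hj => by rw [(Finset.mem_filter.mp hj).2]

lemma comp_mem_dualFeasible {s π : ι → ℝ} (hπ : π ∈ DualFeasible s) {f : ι → ι}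
    (hf : ∀ j, s (f j) ≤ s j) : π ∘ f ∈ DualFeasible s := by
  classical
  refine ⟨fun j => hπ.1 (f j), fun v hv => ?_⟩
  have hmoved : ∑ m, ((∑ j with f j = m, v j : ℕ) : ℝ) * s m ≤ 1 := by
    rw [sum_fiberwise_cast_mul]
    exact (Finset.sum_le_sum fun j _ => by gcongr; exact hf j).trans hv
  simpa only [sum_fiberwise_cast_mul, Function.comp_apply] using hπ.2 _ hmoved

lemma exists_suffix_argmax [LinearOrder ι] (π : ι → ℝ) :
    ∃ f : ι → ι, ∀ j, j ≤ f j ∧ ∀ m, j ≤ m → π m ≤ π (f j) := by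
  classical
  choose f hf using fun j : ι =>
    Finset.exists_max_image (univ.filter (j ≤ ·)) π ⟨j, by simp⟩
  exact ⟨f, fun j => ⟨(Finset.mem_filter.mp (hf j).1).2, fun m hm => (hf j).2 m (by simp [hm])⟩⟩

end FractionalBinPacking

open FractionalBinPacking in
/-- The dual of the fractional bin packing LP (for item sizes `s 0 > s 1 > … > s (p-1)`
in `(0,1]` with multiplicities `n j`) has an optimal solution that is monotone in the
item sizes: `π* 0 ≥ π* 1 ≥ … ≥ π* (p-1)`.  A dual solution `π` is feasible if `π ≥ 0`
and `Σ_j v_j π_j ≤ 1` for every pattern `v ∈ ℕ^p` with `Σ_j v_j s_j ≤ 1`; it is optimal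
if it maximizes `Σ_j n_j π_j` among feasible solutions. -/
theorem dual_FBP_monotone_optimal (p : ℕ) (s : Fin p → ℝ) (n : Fin p → ℕ)
    (hs : ∀ j, 0 < s j ∧ s j ≤ 1) (hanti : StrictAnti s) :
    ∃ π : Fin p → ℝ,
      (∀ j, 0 ≤ π j) ∧
      (∀ v : Fin p → ℕ, (∑ j, (v j : ℝ) * s j) ≤ 1 → (∑ j, (v j : ℝ) * π j) ≤ 1) ∧
      (∀ π' : Fin p → ℝ, (∀ j, 0 ≤ π' j) →
        (∀ v : Fin p → ℕ, (∑ j, (v j : ℝ) * s j) ≤ 1 → (∑ j, (v j : ℝ) * π' j) ≤ 1) →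
        (∑ j, (n j : ℝ) * π' j) ≤ (∑ j, (n j : ℝ) * π j)) ∧
      (∀ i j : Fin p, i ≤ j → π j ≤ π i) := by
  obtain ⟨π, hπ, hmax⟩ := exists_isMaxOn_dualFeasible (fun j => (hs j).2) n
  obtain ⟨f, hf⟩ := exists_suffix_argmax π
  have hfeas : π ∘ f ∈ DualFeasible s := comp_mem_dualFeasible hπ fun j => hanti.antitone (hf j).1
  refine ⟨π ∘ f, hfeas.1, hfeas.2, fun π' h0 h1 => (hmax ⟨h0, h1⟩).trans ?_,
    fun i j hij => (hf i).2 (f j) (hij.trans (hf j).1)⟩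
  exact Finset.sum_le_sum fun j _ => by gcongr; exact (hf j).2 j le_rfl
end

section
/- Let π̄ = (π̄_1,...,π̄_p) be a feasible solution of the dual fractional bin packing LP with π̄_1 ≥ ... ≥ π̄_p, for sizes s_1 > ... > s_p. Define g : [0,1] → [0,1] by g(0)=0 and g(x)=π̄_j for x ∈ [s_j, s_{j-1}) (with s_0 = 1, s_{p+1}=0, π̄_{p+1}=0). Then g is a dual feasible function. -/
/-!
Round each item `x` down to the left end `s j` of the step `[s j, s (j-1))` containing it,
where `g x = π̄ j`. Counting the items on each step gives `v` with
`∑ v j * s j ≤ ∑ x i ≤ 1`, so feasibility of `π̄` yields `∑ g (x i) = ∑ v j * π̄ j ≤ 1`;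
items in the last step `[0, s p)` are worth `π̄ (p+1) = 0` and drop out of both sums.
-/

open Finset

lemma exists_step_index {p : ℕ} {s pib : ℕ → ℝ} {g : ℝ → ℝ}
    (hs0 : s 0 = 1) (hsp : s (p + 1) = 0) (hg1 : g 1 = pib 1)
    (hgstep : ∀ j, 1 ≤ j → j ≤ p + 1 → ∀ x : ℝ, s j ≤ x → x < s (j - 1) → g x = pib j)
    {x : ℝ} (hx : x ∈ Set.Icc (0 : ℝ) 1) :
    ∃ j ∈ Icc 1 (p + 1), s j ≤ x ∧ g x = pib j := by
  classical
  -- The least `j ≥ 1` with `s j ≤ x` has `x < s (j - 1)`, unless `j = 1` and `x = s 0 = 1`.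
  have hex : ∃ k, 1 ≤ k ∧ s k ≤ x := ⟨p + 1, by omega, hsp ▸ hx.1⟩
  obtain ⟨hj1, hjx⟩ := Nat.find_spec hex
  have hjp : Nat.find hex ≤ p + 1 := Nat.find_min' hex ⟨by omega, hsp ▸ hx.1⟩
  refine ⟨Nat.find hex, mem_Icc.2 ⟨hj1, hjp⟩, hjx, ?_⟩
  by_cases hlt : x < s (Nat.find hex - 1)
  · exact hgstep _ hj1 hjp x hjx hlt
  · have hj : Nat.find hex = 1 := by
      by_contra hne
      exact Nat.find_min hex (m := Nat.find hex - 1) (by omega) ⟨by omega, not_lt.1 hlt⟩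
    have hx1 : x = 1 := le_antisymm hx.2 (by simpa [hj, hs0] using not_lt.1 hlt)
    rw [hj, hx1, hg1]

lemma sum_comp_eq_sum_card_mul {ι κ : Type*} [Fintype ι] [DecidableEq κ] (J : ι → κ)
    {t : Finset κ} (hJ : ∀ i, J i ∈ t) (w : κ → ℝ) :
    ∑ i, w (J i) = ∑ j ∈ t, (#{i | J i = j} : ℝ) * w j := by
  rw [← sum_fiberwise_of_maps_to (fun i _ => hJ i)]
  refine sum_congr rfl fun j _ => ?_
  rw [sum_congr rfl fun i hi => congrArg w (mem_filter.1 hi).2, sum_const, nsmul_eq_mul]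

lemma sum_comp_eq_sum_Icc_card_mul {ι : Type*} [Fintype ι] {p : ℕ} (J : ι → ℕ)
    (hJ : ∀ i, J i ∈ Icc 1 (p + 1)) (w : ℕ → ℝ) (hw : w (p + 1) = 0) :
    ∑ i, w (J i) = ∑ j ∈ Icc 1 p, (#{i | J i = j} : ℝ) * w j := by
  rw [sum_comp_eq_sum_card_mul J hJ, sum_Icc_succ_top (by omega), hw, mul_zero, add_zero]

lemma sum_comp_le_one_of_feasible {ι : Type*} [Fintype ι] {p : ℕ} {s pib : ℕ → ℝ}
    (hsp : s (p + 1) = 0) (hlast : pib (p + 1) = 0)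
    (hfeas : ∀ v : ℕ → ℕ, (∑ j ∈ Finset.Icc 1 p, (v j : ℝ) * s j) ≤ 1 →
      (∑ j ∈ Finset.Icc 1 p, (v j : ℝ) * pib j) ≤ 1)
    (x : ι → ℝ) (hx : ∑ i, x i ≤ 1) (J : ι → ℕ) (hJ : ∀ i, J i ∈ Icc 1 (p + 1))
    (hJx : ∀ i, s (J i) ≤ x i) :
    ∑ i, pib (J i) ≤ 1 := by
  rw [sum_comp_eq_sum_Icc_card_mul J hJ pib hlast]
  refine hfeas _ ?_
  calc ∑ j ∈ Icc 1 p, (#{i | J i = j} : ℝ) * s j = ∑ i, s (J i) :=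
        (sum_comp_eq_sum_Icc_card_mul J hJ s hsp).symm
    _ ≤ ∑ i, x i := sum_le_sum fun i _ => hJx i
    _ ≤ 1 := hx

theorem step_function_dualFeasible_general (p : ℕ) (s : ℕ → ℝ) (pib : ℕ → ℝ) (g : ℝ → ℝ)
    (hs0 : s 0 = 1) (hsp : s (p + 1) = 0)
    (hpos : ∀ j, 0 ≤ pib j) (hlast : pib (p + 1) = 0)
    (hfeas : ∀ v : ℕ → ℕ, (∑ j ∈ Finset.Icc 1 p, (v j : ℝ) * s j) ≤ 1 →
      (∑ j ∈ Finset.Icc 1 p, (v j : ℝ) * pib j) ≤ 1)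
    (hg1 : g 1 = pib 1)
    (hgstep : ∀ j, 1 ≤ j → j ≤ p + 1 → ∀ x : ℝ, s j ≤ x → x < s (j - 1) → g x = pib j) :
    (∀ x ∈ Set.Icc (0 : ℝ) 1, g x ∈ Set.Icc (0 : ℝ) 1) ∧
    ∀ (n : ℕ) (x : Fin n → ℝ), (∀ i, x i ∈ Set.Icc (0 : ℝ) 1) → (∑ i, x i) ≤ 1 →
      (∑ i, g (x i)) ≤ 1 := by
  have hstep := fun x (hx : x ∈ Set.Icc (0 : ℝ) 1) => exists_step_index hs0 hsp hg1 hgstep hx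
  have hsum : ∀ (n : ℕ) (x : Fin n → ℝ), (∀ i, x i ∈ Set.Icc (0 : ℝ) 1) → (∑ i, x i) ≤ 1 →
      (∑ i, g (x i)) ≤ 1 := by
    intro n x hx hx1
    choose J hJ hJx hgJ using fun i => hstep (x i) (hx i)
    simpa only [hgJ] using sum_comp_le_one_of_feasible hsp hlast hfeas x hx1 J hJ hJx
  refine ⟨fun x hx => ⟨?_, ?_⟩, hsum⟩
  · obtain ⟨j, -, -, hgx⟩ := hstep x hx
    exact hgx ▸ hpos j
  · simpa using hsum 1 (fun _ => x) (fun _ => hx) (by simpa using hx.2)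

/-- Let `π̄` be a feasible solution of the dual fractional bin packing LP with
`π̄ 1 ≥ … ≥ π̄ p`, for sizes `1 = s 0 > s 1 > … > s p > s (p+1) = 0`.  Define
`g : [0,1] → [0,1]` by `g 0 = 0` and `g x = π̄ j` for `x ∈ [s j, s (j-1))`
(and `g 1 = π̄ 1`, with `π̄ (p+1) = 0`).  Then `g` is a dual feasible function. -/
theorem step_function_dualFeasible (p : ℕ) (s : ℕ → ℝ) (pib : ℕ → ℝ) (g : ℝ → ℝ)
    (hs0 : s 0 = 1) (hsp : s (p + 1) = 0)
    (hdec : ∀ j ≤ p, s (j + 1) < s j)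
    (hpos : ∀ j, 0 ≤ pib j) (hlast : pib (p + 1) = 0)
    (hmono : ∀ i j, 1 ≤ i → i ≤ j → j ≤ p + 1 → pib j ≤ pib i)
    (hfeas : ∀ v : ℕ → ℕ, (∑ j ∈ Finset.Icc 1 p, (v j : ℝ) * s j) ≤ 1 →
      (∑ j ∈ Finset.Icc 1 p, (v j : ℝ) * pib j) ≤ 1)
    (hg0 : g 0 = 0) (hg1 : g 1 = pib 1)
    (hgstep : ∀ j, 1 ≤ j → j ≤ p + 1 → ∀ x : ℝ, s j ≤ x → x < s (j - 1) → g x = pib j) :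
    (∀ x ∈ Set.Icc (0 : ℝ) 1, g x ∈ Set.Icc (0 : ℝ) 1) ∧
    ∀ (n : ℕ) (x : Fin n → ℝ), (∀ i, x i ∈ Set.Icc (0 : ℝ) 1) → (∑ i, x i) ≤ 1 →
      (∑ i, g (x i)) ≤ 1 :=
  step_function_dualFeasible_general p s pib g hs0 hsp hpos hlast hfeas hg1 hgstep
end

section
/- Next Fit Decreasing Height (NFDH) packing guarantee in 2D: if rectangles with widths w_i ≤ 1 and heights h_i ≤ 1 are packed by NFDH into a strip of width 1, and NFDH uses levels of heights h^{(1)} ≥ h^{(2)} ≥ ... ≥ h^{(l)}, then the total area of rectangles packed in level j is at least (1 − w_max)·h^{(j+1)}, where w_max is the maximum rectangle width; consequently the total packed area is at least (1 − w_max)·(H − h^{(1)}) where H = Σ_j h^{(j)}. -/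
/-!
Every rectangle of level `j` is at least as tall as level `j + 1`, so the area of level `j` is at
least its total width times `levH (j + 1)`; for a closed level that width exceeds `1 - wmax`.
Summing over the closed levels `0, …, L - 2` gives `(1 - wmax) * (levH 1 + ⋯ + levH (L - 1))`,
which is `(1 - wmax) * (H - levH 0)`; all other rectangles only add nonnegative area, since
each is at least as tall as the (nonnegative) level above its own.
-/

open Finset

theorem Finset.sum_mul_le_sum_mul_of_le {ι : Type*} {s : Finset ι} {w h : ι → ℝ} {c : ℝ}
    (hw : ∀ i ∈ s, 0 ≤ w i) (hc : ∀ i ∈ s, c ≤ h i) :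
    (∑ i ∈ s, w i) * c ≤ ∑ i ∈ s, w i * h i := by
  rw [sum_mul]
  exact sum_le_sum fun i hi => mul_le_mul_of_nonneg_left (hc i hi) (hw i hi)

section Levels

variable {ι : Type*} {w h : ι → ℝ} {lev : ι → ℕ} {levH : ℕ → ℝ}

theorem levelWidth_mul_le_levelArea (hw : ∀ i, 0 ≤ w i)
    (hheight : ∀ i, levH (lev i + 1) ≤ h i) (s : Finset ι) (j : ℕ) :
    (∑ i ∈ s.filter (fun i => lev i = j), w i) * levH (j + 1) ≤
      ∑ i ∈ s.filter (fun i => lev i = j), w i * h i :=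
  sum_mul_le_sum_mul_of_le (fun i _ => hw i) fun i hi => (mem_filter.1 hi).2 ▸ hheight i

theorem area_nonneg_of_levH_nonneg (hw : ∀ i, 0 ≤ w i) (hnonneg : ∀ j, 0 ≤ levH j)
    (hheight : ∀ i, levH (lev i + 1) ≤ h i) (i : ι) : 0 ≤ w i * h i :=
  mul_nonneg (hw i) ((hnonneg _).trans (hheight i))

end Levels

theorem NFDH_area_guarantee_general (n L : ℕ) (hL : 1 ≤ L)
    (w h : Fin n → ℝ) (wmax : ℝ) (lev : Fin n → ℕ) (levH : ℕ → ℝ)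
    (hw : ∀ i, 0 < w i ∧ w i ≤ wmax)
    (hnonneg : ∀ j, 0 ≤ levH j)
    (hclosed : ∀ j, j + 1 < L →
      1 - wmax < ∑ i ∈ Finset.univ.filter (fun i => lev i = j), w i)
    (hheight : ∀ i, levH (lev i + 1) ≤ h i) :
    (∀ j, j + 1 < L →
      (1 - wmax) * levH (j + 1) ≤
        ∑ i ∈ Finset.univ.filter (fun i => lev i = j), w i * h i) ∧
    (1 - wmax) * ((∑ j ∈ Finset.range L, levH j) - levH 0) ≤ ∑ i, w i * h i := by
  have hw₀ : ∀ i, 0 ≤ w i := fun i => (hw i).1.le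
  have level_bound : ∀ j, j + 1 < L →
      (1 - wmax) * levH (j + 1) ≤
        ∑ i ∈ Finset.univ.filter (fun i => lev i = j), w i * h i := fun j hj =>
    (mul_le_mul_of_nonneg_right (hclosed j hj).le (hnonneg _)).trans
      (levelWidth_mul_le_levelArea hw₀ hheight univ j)
  refine ⟨level_bound, ?_⟩
  obtain ⟨m, rfl⟩ := Nat.exists_eq_add_of_le' hL
  rw [sum_range_succ', add_sub_cancel_right, mul_sum]
  calc ∑ j ∈ range m, (1 - wmax) * levH (j + 1)
      ≤ ∑ j ∈ range m, ∑ i ∈ univ.filter (fun i => lev i = j), w i * h i :=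
        sum_le_sum fun j hj => level_bound j (by simpa using hj)
    _ ≤ ∑ i, w i * h i :=
        sum_fiberwise_le_sum_of_sum_fiber_nonneg fun _ _ =>
          sum_nonneg fun i _ => area_nonneg_of_levH_nonneg hw₀ hnonneg hheight i

/-- NFDH guarantee in 2D.  Rectangles `(w i, h i)` with `w i ≤ wmax ≤ 1` are packed by
NFDH into a strip of width 1 using levels `0, …, L-1` with nonincreasing level heights
`levH`; every closed level (all but the last) has total rectangle width exceeding
`1 − wmax`, and every rectangle in level `j` has height at least `levH (j+1)`.
Then the area packed in level `j` is at least `(1 − wmax) * levH (j+1)` for each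
non-last level `j`, and the total packed area is at least
`(1 − wmax) * (H − levH 0)` where `H = Σ_j levH j`. -/
theorem NFDH_area_guarantee (n L : ℕ) (hL : 1 ≤ L)
    (w h : Fin n → ℝ) (wmax : ℝ) (lev : Fin n → ℕ) (levH : ℕ → ℝ)
    (hwmax : wmax ≤ 1)
    (hw : ∀ i, 0 < w i ∧ w i ≤ wmax) (hh : ∀ i, 0 < h i ∧ h i ≤ 1)
    (hlev : ∀ i, lev i < L)
    (hmono : ∀ j j' : ℕ, j ≤ j' → levH j' ≤ levH j)
    (hnonneg : ∀ j, 0 ≤ levH j) (hzero : ∀ j, L ≤ j → levH j = 0)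
    (hclosed : ∀ j, j + 1 < L →
      1 - wmax < ∑ i ∈ Finset.univ.filter (fun i => lev i = j), w i)
    (hheight : ∀ i, levH (lev i + 1) ≤ h i) :
    (∀ j, j + 1 < L →
      (1 - wmax) * levH (j + 1) ≤
        ∑ i ∈ Finset.univ.filter (fun i => lev i = j), w i * h i) ∧
    (1 - wmax) * ((∑ j ∈ Finset.range L, levH j) - levH 0) ≤ ∑ i, w i * h i :=
  NFDH_area_guarantee_general n L hL w h wmax lev levH hw hnonneg hclosed hheight
end

section
/- Segment filling bound (case q < k): suppose boxes all with length in (1/(q+1), 1/q] and width at least w are packed by next-fit into q vertical slips of a segment of height c, such that the packed height in every slip is at least c − 1. Then the total modified volume Σ_R f_k(l(R))·g(w(R))·h(R) of the packed boxes is at least (c−1)·g(w), for any nonincreasing dual feasible function g. -/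
/-! Every box has weight `f_k = 1/q`, and the `q` slips together hold height at least
`q (c - 1)`; so the weighted volume is at least `(1/q) · g w0 · q (c - 1)`. -/

lemma floor_one_div_eq_of_mem_Ioc {q : ℕ} {x : ℝ} (hx : x ∈ Set.Ioc (1 / ((q : ℝ) + 1)) (1 / q)) :
    ⌊1 / x⌋ = q := by
  obtain ⟨hlow, hhigh⟩ := hx
  have hxpos : 0 < x := lt_trans (by positivity) hlow
  rw [Int.floor_eq_iff]
  constructor
  · simpa using one_div_le_one_div_of_le hxpos hhigh
  · simpa using one_div_lt_one_div_of_lt (by positivity) hlow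

lemma fHarm_eq_of_mem_Ioc {k q : ℕ} (hqk : q < k) {x : ℝ}
    (hx : x ∈ Set.Ioc (1 / ((q : ℝ) + 1)) (1 / q)) : fHarm k x = 1 / q := by
  have hk : (1 : ℝ) / k ≤ 1 / ((q : ℝ) + 1) :=
    one_div_le_one_div_of_le (by positivity) (by exact_mod_cast hqk)
  rw [fHarm, if_neg (not_le.2 (hk.trans_lt hx.1)), floor_one_div_eq_of_mem_Ioc hx]
  simp

lemma nsmul_le_sum_of_le_sum_fiber {ι M : Type*} [Fintype ι] [DecidableEq ι]
    [AddCommMonoid M] [PartialOrder M] [IsOrderedAddMonoid M]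
    {q : ℕ} {a : M} (slip : ι → ℕ) (h : ι → M) (hslip : ∀ i, slip i < q)
    (hfill : ∀ s < q, a ≤ ∑ i ∈ Finset.univ.filter (fun i => slip i = s), h i) :
    q • a ≤ ∑ i, h i := by
  rw [← Finset.sum_fiberwise_of_maps_to (g := slip) (t := Finset.range q)
    (fun i _ => Finset.mem_range.2 (hslip i))]
  simpa using Finset.card_nsmul_le_sum (Finset.range q) _ a
    (fun s hs => hfill s (Finset.mem_range.1 hs))

theorem segment_fill_bound_general (k q c : ℕ) (hq1 : 1 ≤ q) (hqk : q < k)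
    (n : ℕ) (l w h : Fin n → ℝ) (w0 : ℝ) (g : ℝ → ℝ) (slip : Fin n → ℕ)
    (hslip : ∀ i, slip i < q)
    (hl : ∀ i, 1 / ((q : ℝ) + 1) < l i ∧ l i ≤ 1 / (q : ℝ))
    (hh : ∀ i, 0 < h i ∧ h i ≤ 1)
    (hg : ∀ i, g w0 ≤ g (w i)) (hg0 : 0 ≤ g w0)
    (hfill : ∀ s, s < q →
      (c : ℝ) - 1 ≤ ∑ i ∈ Finset.univ.filter (fun i => slip i = s), h i) :
    ((c : ℝ) - 1) * g w0 ≤ ∑ i, fHarm k (l i) * g (w i) * h i := by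
  have hq : (q : ℝ) ≠ 0 := by positivity
  have htotal : (q : ℝ) * ((c : ℝ) - 1) ≤ ∑ i, h i := by
    simpa using nsmul_le_sum_of_le_sum_fiber slip h hslip hfill
  calc ((c : ℝ) - 1) * g w0 = 1 / q * g w0 * (q * ((c : ℝ) - 1)) := by field_simp
    _ ≤ 1 / q * g w0 * ∑ i, h i := by gcongr
    _ = ∑ i, 1 / q * g w0 * h i := Finset.mul_sum _ _ _
    _ ≤ ∑ i, fHarm k (l i) * g (w i) * h i := Finset.sum_le_sum fun i _ => by
        rw [fHarm_eq_of_mem_Ioc hqk (hl i)]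
        have := (hh i).1
        gcongr
        exact hg i

/-- Segment filling bound (case `q < k`): boxes with length in `(1/(q+1), 1/q]`, width
at least `w0` and height in `(0,1]` are packed by next-fit into `q` slips of a segment
of height `c`, every slip being filled to height at least `c − 1`.  Then the total
modified volume `Σ f_k(l R) * g(w R) * h R` is at least `(c−1) * g w0`, for any
function `g` with `g (w R) ≥ g w0 ≥ 0` on the packed boxes. -/
theorem segment_fill_bound (k q c : ℕ) (hq1 : 1 ≤ q) (hqk : q < k) (hk : 2 ≤ k)
    (n : ℕ) (l w h : Fin n → ℝ) (w0 : ℝ) (g : ℝ → ℝ) (slip : Fin n → ℕ)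
    (hslip : ∀ i, slip i < q)
    (hl : ∀ i, 1 / ((q : ℝ) + 1) < l i ∧ l i ≤ 1 / (q : ℝ))
    (hw : ∀ i, w0 ≤ w i) (hh : ∀ i, 0 < h i ∧ h i ≤ 1)
    (hg : ∀ i, g w0 ≤ g (w i)) (hg0 : 0 ≤ g w0)
    (hfill : ∀ s, s < q →
      (c : ℝ) - 1 ≤ ∑ i ∈ Finset.univ.filter (fun i => slip i = s), h i) :
    ((c : ℝ) - 1) * g w0 ≤ ∑ i, fHarm k (l i) * g (w i) * h i :=
  segment_fill_bound_general k q c hq1 hqk n l w h w0 g slip hslip hl hh hg hg0 hfill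
end
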